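/- Let n, m be natural numbers, let F : (Fin n → Bool) → Bool and G : (Fin m → Bool) → Bool be Boolean functions, and let H be the combiner of F and G, i.e., the Boolean function in the variables (x : Fin n → Bool, y : Fin m → Bool, z : Bool, z' : Bool) defined by H(x,y,z,z') = (F x ∧ z) ∨ (¬z ∧ (∀ i, x i = true) ∧ G y ∧ z'). Then both original counts can be decoded from ‖H‖: ‖F‖ = ‖H‖ / 2^(m+1) (natural-number division) and ‖G‖ = ‖H‖ % 2^(m+1). -/

import Mathlib

/-!
The models of the combiner with `z = true` are the models of `F` with `y` and `z'` free, so there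
are `2 ^ (m + 1) * ‖F‖` of them; those with `z = false` have `x` all-true and `z' = true`, so there
are `‖G‖ < 2 ^ (m + 1)` of them. Hence `‖H‖ = 2 ^ (m + 1) * ‖F‖ + ‖G‖` is a division with remainder.
-/

section Combiner

variable {α β : Type*} [DecidableEq α]

def combiner (F : α → Bool) (G : β → Bool) (a : α) (x : α) (y : β) (z z' : Bool) : Bool :=
  (F x && z) || (!z && decide (x = a) && G y && z')

theorem setOf_combiner_eq_union (F : α → Bool) (G : β → Bool) (a : α) :
    {p : α × β × Bool × Bool | combiner F G a p.1 p.2.1 p.2.2.1 p.2.2.2 = true} =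
      {x | F x = true} ×ˢ Set.univ ×ˢ {true} ×ˢ Set.univ ∪
        {a} ×ˢ {y | G y = true} ×ˢ {false} ×ˢ {true} := by
  ext ⟨x, y, z, z'⟩
  cases z <;> cases z' <;> simp [combiner, and_comm]

theorem card_setOf_combiner [Finite α] [Finite β] (F : α → Bool) (G : β → Bool) (a : α) :
    Nat.card {p : α × β × Bool × Bool | combiner F G a p.1 p.2.1 p.2.2.1 p.2.2.2 = true} =
      2 * Nat.card β * Nat.card {x | F x = true} + Nat.card {y | G y = true} := by
  rw [Nat.card_coe_set_eq, setOf_combiner_eq_union,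
    Set.ncard_union_eq (by simp [Set.disjoint_left])]
  simp only [Set.ncard_prod, Set.ncard_univ, Set.ncard_singleton, Nat.card_coe_set_eq,
    Nat.card_eq_fintype_card, Fintype.card_bool]
  ring

end Combiner

/-- Decoding both counts from the combiner:
`‖F‖ = ‖H‖ / 2^(m+1)` and `‖G‖ = ‖H‖ % 2^(m+1)`. -/
theorem combiner_decode (n m : ℕ) (F : (Fin n → Bool) → Bool) (G : (Fin m → Bool) → Bool)
    (H : (Fin n → Bool) → (Fin m → Bool) → Bool → Bool → Bool)
    (hH : ∀ (x : Fin n → Bool) (y : Fin m → Bool) (z z' : Bool),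
      H x y z z' = ((F x && z) || (!z && decide (∀ i, x i = true) && G y && z'))) :
    Nat.card {σ : Fin n → Bool | F σ = true} =
        Nat.card {p : (Fin n → Bool) × (Fin m → Bool) × Bool × Bool |
          H p.1 p.2.1 p.2.2.1 p.2.2.2 = true} / 2 ^ (m + 1) ∧
      Nat.card {σ : Fin m → Bool | G σ = true} =
        Nat.card {p : (Fin n → Bool) × (Fin m → Bool) × Bool × Bool |
          H p.1 p.2.1 p.2.2.1 p.2.2.2 = true} % 2 ^ (m + 1) := by
  have hH_eq : H = combiner F G fun _ => true := by
    funext x y z z'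
    simp only [hH, combiner, ← funext_iff]
  have hcube : Nat.card (Fin m → Bool) = 2 ^ m := by simp
  have hcount : Nat.card {p : (Fin n → Bool) × (Fin m → Bool) × Bool × Bool |
      H p.1 p.2.1 p.2.2.1 p.2.2.2 = true} =
        Nat.card {σ : Fin m → Bool | G σ = true} +
          2 ^ (m + 1) * Nat.card {σ : Fin n → Bool | F σ = true} := by
    rw [hH_eq, card_setOf_combiner, hcube]
    ring
  have hG : Nat.card {σ : Fin m → Bool | G σ = true} < 2 ^ (m + 1) :=
    calc Nat.card {σ : Fin m → Bool | G σ = true}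
        _ ≤ Nat.card (Fin m → Bool) := Finite.card_subtype_le _
        _ = 2 ^ m := hcube
        _ < 2 ^ (m + 1) := Nat.pow_lt_pow_succ one_lt_two
  obtain ⟨hdiv, hmod⟩ := (Nat.div_mod_unique (by positivity)).2 ⟨hcount.symm, hG⟩
  exact ⟨hdiv.symm, hmod.symm⟩
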